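/- arXiv:0811.0699 — 2 statements merged into one kernel-verified Lean document; each statement's English description precedes it below -/
import Mathlib

section
/- For every Boolean function f : {0,1}^n → {0,1}, there exists a Boolean formula C computing f with not(C) ≤ d(f); that is, d(f) NOT operators suffice to represent f by a Boolean formula. -/
namespace InversionComplexity

open Classical

/-- A chain is a strictly increasing sequence of Boolean vectors in `{0,1}^n`
(pointwise order on `Fin n → Bool`). -/
def IsChain {n : ℕ} (X : List (Fin n → Bool)) : Prop :=
  X.Chain' (· < ·)

/-- The decrease `d_X(f)` of `f` on a sequence `X`: the number of consecutive
indices `i` with `f (x^i) = 1` and `f (x^{i+1}) = 0`. -/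
def decOn {n : ℕ} (f : (Fin n → Bool) → Bool) : List (Fin n → Bool) → ℕ
  | a :: b :: t => (if f a = true ∧ f b = false then 1 else 0) + decOn f (b :: t)
  | _ => 0

/-- The decrease `d(f)` of `f`: the maximum of `d_X(f)` over all chains `X`. -/
noncomputable def dec {n : ℕ} (f : (Fin n → Bool) → Bool) : ℕ :=
  sSup { m | ∃ X : List (Fin n → Bool), IsChain X ∧ decOn f X = m }

/-- Boolean formulas: finite trees built from variable leaves, constant leaves,
binary AND/OR nodes and unary NOT nodes. -/
inductive Formula (n : ℕ) : Type
  | var : Fin n → Formula n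
  | const : Bool → Formula n
  | and : Formula n → Formula n → Formula n
  | or : Formula n → Formula n → Formula n
  | not : Formula n → Formula n

/-- Evaluation of a formula on an input. -/
def Formula.eval {n : ℕ} (x : Fin n → Bool) : Formula n → Bool
  | .var i => x i
  | .const b => b
  | .and C D => C.eval x && D.eval x
  | .or C D => C.eval x || D.eval x
  | .not C => !(C.eval x)

/-- `not(C)`: the number of NOT nodes of a formula. -/
def Formula.notCount {n : ℕ} : Formula n → ℕ
  | .var _ => 0
  | .const _ => 0
  | .and C D => C.notCount + D.notCount
  | .or C D => C.notCount + D.notCount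
  | .not C => C.notCount + 1

/-- `not_d(C, x)`: the number of NOT nodes of `C` in the *down* state on input `x`,
i.e. whose input subformula evaluates to `1`. -/
def Formula.notDown {n : ℕ} (x : Fin n → Bool) : Formula n → ℕ
  | .var _ => 0
  | .const _ => 0
  | .and C D => C.notDown x + D.notDown x
  | .or C D => C.notDown x + D.notDown x
  | .not C => C.notDown x + (if C.eval x = true then 1 else 0)

/-- A formula computes a Boolean function `f` if it evaluates to `f x` on every input `x`. -/
def Formula.Computes {n : ℕ} (C : Formula n) (f : (Fin n → Bool) → Bool) : Prop :=
  ∀ x, C.eval x = f x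

/-- `I_f(f)`: the inversion complexity of `f` in formulas, the minimum number of
NOT nodes over all formulas computing `f`. -/
noncomputable def invFormula {n : ℕ} (f : (Fin n → Bool) → Bool) : ℕ :=
  sInf { k | ∃ C : Formula n, C.Computes f ∧ C.notCount = k }

/-- The set `S` of all vectors `x` such that every chain starting with `x`
has decrease `0` with respect to `f`. -/
def startSet {n : ℕ} (f : (Fin n → Bool) → Bool) : Set (Fin n → Bool) :=
  { x | ∀ X : List (Fin n → Bool), IsChain X → X.head? = some x → decOn f X = 0 }

/-
Let `U k = lowSet f k` be the set of inputs from which every chain has decrease less than `k`.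
Each `U k` is an upper set, `U 0` is empty and `U (d(f) + 1)` is everything. On a level
`U (k + 1) \ U k` the function `f` is monotone: a step from `1` down to `0` inside the level,
followed by a chain of decrease `k` from its top, would give decrease `k + 1` from its bottom.
Upper sets and functions monotone on a level are computed by NOT-free formulas (disjunctions of
monomials), so a formula for `f` on `U (k + 1)` is obtained from one for `f` on `U k` at the
cost of a single NOT, in the selector `if x ∈ U k then … else …`.
-/

variable {n : ℕ}

section Chains

lemma decOn_cons_cons (f : (Fin n → Bool) → Bool) (a b : Fin n → Bool)
    (t : List (Fin n → Bool)) :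
    decOn f (a :: b :: t) = (if f a = true ∧ f b = false then 1 else 0) + decOn f (b :: t) :=
  rfl

lemma decOn_le_length (f : (Fin n → Bool) → Bool) :
    ∀ X : List (Fin n → Bool), decOn f X ≤ X.length
  | [] | [_] => by simp [decOn]
  | a :: b :: t => by
    have := decOn_le_length f (b :: t)
    simp only [decOn_cons_cons, List.length_cons] at *
    split <;> omega

lemma IsChain.length_le_card {X : List (Fin n → Bool)} (hX : IsChain X) :
    X.length ≤ Fintype.card (Fin n → Bool) :=
  List.Nodup.length_le_card ((List.isChain_iff_pairwise.mp hX).imp ne_of_lt)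

lemma decOn_le_dec (f : (Fin n → Bool) → Bool) {X : List (Fin n → Bool)} (hX : IsChain X) :
    decOn f X ≤ dec f := by
  refine le_csSup ⟨Fintype.card (Fin n → Bool), ?_⟩ ⟨X, hX, rfl⟩
  rintro _ ⟨Y, hY, rfl⟩
  exact (decOn_le_length f Y).trans hY.length_le_card

end Chains

def lowSet (f : (Fin n → Bool) → Bool) (k : ℕ) : Set (Fin n → Bool) :=
  {x | ∀ t, IsChain (x :: t) → decOn f (x :: t) < k}

section LowSet

variable {f : (Fin n → Bool) → Bool}

lemma lowSet_zero : lowSet f 0 = ∅ :=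
  Set.eq_empty_of_forall_notMem fun x hx =>
    (hx [] (List.isChain_singleton x)).not_ge (Nat.zero_le _)

lemma lowSet_dec_succ : lowSet f (dec f + 1) = Set.univ :=
  Set.eq_univ_of_forall fun _ _ hX => Nat.lt_succ_of_le (decOn_le_dec f hX)

lemma isUpperSet_lowSet (k : ℕ) : IsUpperSet (lowSet f k) := by
  intro x y hxy hx t hy
  obtain rfl | hlt := hxy.eq_or_lt
  · exact hx t hy
  · have := hx (y :: t) (List.isChain_cons_cons.mpr ⟨hlt, hy⟩)
    rw [decOn_cons_cons] at this
    omega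

lemma apply_eq_true_of_le_of_mem_level {k : ℕ} {x y : Fin n → Bool} (hxy : x ≤ y)
    (hx : x ∈ lowSet f (k + 1)) (hy : y ∉ lowSet f k) (hfx : f x = true) : f y = true := by
  obtain rfl | hlt := hxy.eq_or_lt
  · exact hfx
  simp only [lowSet, Set.mem_ofPred_eq, not_forall, not_lt] at hy
  obtain ⟨t, hyt, hk⟩ := hy
  by_contra hfy
  have := hx (y :: t) (List.isChain_cons_cons.mpr ⟨hlt, hyt⟩)
  rw [decOn_cons_cons, if_pos ⟨hfx, Bool.eq_false_iff.mpr hfy⟩] at this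
  omega

end LowSet

namespace Formula

def monomial (a : Fin n → Bool) : Formula n :=
  ((List.finRange n).filter (a ·)).foldr (fun i C => .and (.var i) C) (.const true)

noncomputable def upClosure (T : Finset (Fin n → Bool)) : Formula n :=
  T.toList.foldr (fun a C => .or (monomial a) C) (.const false)

def ite (A B C : Formula n) : Formula n :=
  .or (.and A B) (.and (.not A) C)

lemma eval_monomial (x a : Fin n → Bool) : (monomial a).eval x = decide (a ≤ x) := by
  have key : ∀ l : List (Fin n),
      (l.foldr (fun i C => .and (.var i) C) (.const true) : Formula n).eval x = l.all (x ·) := by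
    intro l
    induction l with
    | nil => rfl
    | cons i l ih => simp [eval, ih]
  rw [monomial, key, Bool.eq_iff_iff, List.all_eq_true, decide_eq_true_iff, Pi.le_def]
  simp only [List.mem_filter, List.mem_finRange, true_and, Bool.le_iff_imp]

lemma eval_upClosure (x : Fin n → Bool) (T : Finset (Fin n → Bool)) :
    (upClosure T).eval x = decide (∃ a ∈ T, a ≤ x) := by
  have key : ∀ l : List (Fin n → Bool),
      (l.foldr (fun a C => .or (monomial a) C) (.const false) : Formula n).eval x
        = l.any (fun a => decide (a ≤ x)) := by
    intro l
    induction l with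
    | nil => rfl
    | cons a l ih => simp [eval, ih, eval_monomial]
  rw [upClosure, key, Bool.eq_iff_iff, List.any_eq_true, decide_eq_true_iff]
  simp only [Finset.mem_toList, decide_eq_true_eq]

lemma notCount_upClosure (T : Finset (Fin n → Bool)) : (upClosure T).notCount = 0 := by
  have hmono : ∀ (a : Fin n → Bool), (monomial a).notCount = 0 := by
    intro a
    unfold monomial
    induction (List.finRange n).filter (a ·) with
    | nil => rfl
    | cons i l ih => simp [notCount, ih]
  unfold upClosure
  induction T.toList with
  | nil => rfl
  | cons a l ih => simp [notCount, ih, hmono]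

lemma eval_ite (x : Fin n → Bool) (A B C : Formula n) :
    (ite A B C).eval x = if A.eval x = true then B.eval x else C.eval x := by
  cases h : A.eval x <;> simp [ite, eval, h]

lemma notCount_ite (A B C : Formula n) :
    (ite A B C).notCount = 2 * A.notCount + B.notCount + C.notCount + 1 := by
  simp only [ite, notCount]
  omega

lemma exists_notFree_of_isUpperSet {S : Set (Fin n → Bool)} (hS : IsUpperSet S) :
    ∃ A : Formula n, A.notCount = 0 ∧ ∀ x, A.eval x = decide (x ∈ S) := by
  refine ⟨upClosure S.toFinset, notCount_upClosure _, fun x => ?_⟩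
  rw [eval_upClosure, Bool.eq_iff_iff, decide_eq_true_iff, decide_eq_true_iff]
  simp only [Set.mem_toFinset]
  exact ⟨fun ⟨a, ha, hax⟩ => hS hax ha, fun hx => ⟨x, hx, le_rfl⟩⟩

end Formula

section Construction

variable (f : (Fin n → Bool) → Bool)

lemma exists_notFree_eq_on_level (k : ℕ) :
    ∃ M : Formula n, M.notCount = 0 ∧
      ∀ x ∈ lowSet f (k + 1), x ∉ lowSet f k → M.eval x = f x := by
  let T := {y | y ∈ lowSet f (k + 1) ∧ y ∉ lowSet f k ∧ f y = true}.toFinset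
  refine ⟨.upClosure T, Formula.notCount_upClosure T, fun x hx hx' => ?_⟩
  rw [Formula.eval_upClosure, Bool.eq_iff_iff, decide_eq_true_iff]
  constructor
  · rintro ⟨a, ha, hax⟩
    simp only [T, Set.mem_toFinset, Set.mem_ofPred_eq] at ha
    exact apply_eq_true_of_le_of_mem_level hax ha.1 hx' ha.2.2
  · intro hfx
    exact ⟨x, by simp [T, hx, hx', hfx], le_rfl⟩

lemma exists_formula_eq_on_lowSet (k : ℕ) :
    ∃ C : Formula n, C.notCount ≤ k ∧ ∀ x ∈ lowSet f (k + 1), C.eval x = f x := by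
  induction k with
  | zero =>
    obtain ⟨M, hM, hMf⟩ := exists_notFree_eq_on_level f 0
    exact ⟨M, hM.le, fun x hx => hMf x hx (by simp [lowSet_zero])⟩
  | succ k ih =>
    obtain ⟨C, hC, hCf⟩ := ih
    obtain ⟨A, hA, hAS⟩ :=
      Formula.exists_notFree_of_isUpperSet (isUpperSet_lowSet (f := f) (k + 1))
    obtain ⟨M, hM, hMf⟩ := exists_notFree_eq_on_level f (k + 1)
    refine ⟨.ite A C M, by rw [Formula.notCount_ite]; omega, fun x hx => ?_⟩
    rw [Formula.eval_ite, hAS]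
    by_cases hxk : x ∈ lowSet f (k + 1)
    · simp [hxk, hCf x hxk]
    · simp [hxk, hMf x hx hxk]

end Construction

/-- Upper bound: `d(f)` NOT operators suffice to represent `f` by a formula. -/
theorem formula_not_upper_bound (n : ℕ) (f : (Fin n → Bool) → Bool) :
    ∃ C : Formula n, C.Computes f ∧ C.notCount ≤ dec f := by
  obtain ⟨C, hC, hCf⟩ := exists_formula_eq_on_lowSet f (dec f)
  exact ⟨C, fun x => hCf x (lowSet_dec_succ ▸ Set.mem_univ x), hC⟩

end InversionComplexity
end

section
/- For every Boolean function f : {0,1}^n → {0,1} and every Boolean formula C computing f, the number of NOT operators in C is at least d(f); that is, not(C) ≥ d(f). -/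
namespace InversionComplexity

open Classical

/-
Along a chain, a monotone function never decreases, so variables and constants contribute no
decrease. On each step where an AND or OR gate decreases, one of its inputs decreases too. The
decreases of a NOT gate are the increases of its input, and since increases and decreases of a
Boolean sequence alternate, there is at most one more increase than decrease. Induction on the
formula gives `d_X(C) ≤ not(C)` on every chain `X`.
-/

section DecreaseOnLists

variable {n : ℕ}

theorem decOn_eq_zero_of_monotone {f : (Fin n → Bool) → Bool} (hf : Monotone f) :
    ∀ {X : List (Fin n → Bool)}, IsChain X → decOn f X = 0
  | [], _ | [_], _ => rfl
  | a :: b :: t, hX => by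
    obtain ⟨hab, ht⟩ := List.isChain_cons_cons.mp hX
    have hfab : f a ≤ f b := hf hab.le
    have : ¬(f a = true ∧ f b = false) := by
      rintro ⟨ha, hb⟩
      exact absurd (ha ▸ hb ▸ hfab) (by decide)
    simp [decOn, this, decOn_eq_zero_of_monotone hf ht]

theorem decOn_le_add_of_step {f g h : (Fin n → Bool) → Bool}
    (hstep : ∀ a b, h a = true → h b = false →
      (f a = true ∧ f b = false) ∨ (g a = true ∧ g b = false)) :
    ∀ X : List (Fin n → Bool), decOn h X ≤ decOn f X + decOn g X
  | [] | [_] => le_rfl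
  | a :: b :: t => by
    have step : (if h a = true ∧ h b = false then 1 else 0) ≤
        (if f a = true ∧ f b = false then 1 else 0) +
          (if g a = true ∧ g b = false then 1 else 0) := by
      split_ifs <;> grind
    have := decOn_le_add_of_step hstep (b :: t)
    simp only [decOn]
    omega

theorem decOn_and_le (f g : (Fin n → Bool) → Bool) (X : List (Fin n → Bool)) :
    decOn (fun x => f x && g x) X ≤ decOn f X + decOn g X :=
  decOn_le_add_of_step (fun a b => by cases f a <;> cases f b <;> cases g a <;> cases g b <;> simp) X

theorem decOn_or_le (f g : (Fin n → Bool) → Bool) (X : List (Fin n → Bool)) :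
    decOn (fun x => f x || g x) X ≤ decOn f X + decOn g X :=
  decOn_le_add_of_step (fun a b => by cases f a <;> cases f b <;> cases g a <;> cases g b <;> simp) X

/-- The correction `(f a).toNat` is what makes the induction go through: a sequence starting
at `1` must decrease before it can increase. -/
theorem decOn_not_cons_add_le (f : (Fin n → Bool) → Bool) :
    ∀ (a : Fin n → Bool) (t : List (Fin n → Bool)),
      decOn (fun x => !f x) (a :: t) + (f a).toNat ≤ decOn f (a :: t) + 1
  | a, [] => by cases f a <;> simp [decOn]
  | a, b :: t => by
    have := decOn_not_cons_add_le f b t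
    cases ha : f a <;> cases hb : f b <;> simp_all [decOn] <;> omega

theorem decOn_not_le (f : (Fin n → Bool) → Bool) (X : List (Fin n → Bool)) :
    decOn (fun x => !f x) X ≤ decOn f X + 1 := by
  cases X with
  | nil => exact Nat.zero_le _
  | cons a t => exact le_of_add_le_left (decOn_not_cons_add_le f a t)

end DecreaseOnLists

theorem Formula.decOn_eval_le_notCount {n : ℕ} (C : Formula n) {X : List (Fin n → Bool)}
    (hX : IsChain X) : decOn (fun x => C.eval x) X ≤ C.notCount := by
  induction C with
  | var i => exact (decOn_eq_zero_of_monotone (Function.monotone_eval i) hX).le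
  | const b => exact (decOn_eq_zero_of_monotone monotone_const hX).le
  | and D E ihD ihE => exact (decOn_and_le _ _ X).trans (add_le_add ihD ihE)
  | or D E ihD ihE => exact (decOn_or_le _ _ X).trans (add_le_add ihD ihE)
  | not D ihD => exact (decOn_not_le _ X).trans (Nat.add_le_add_right ihD 1)

/-- Lower bound: every formula computing `f` has at least `d(f)` NOT operators. -/
theorem formula_not_lower_bound (n : ℕ) (f : (Fin n → Bool) → Bool)
    (C : Formula n) (hC : C.Computes f) :
    dec f ≤ C.notCount := by
  obtain rfl : f = fun x => C.eval x := funext fun x => (hC x).symm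
  refine csSup_le' ?_
  rintro m ⟨X, hX, rfl⟩
  exact C.decOn_eval_le_notCount hX

end InversionComplexity
end
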